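/- arXiv:1605.07544 — 2 statements merged into one kernel-verified Lean document; each statement's English description precedes it below -/
import Mathlib

section
/- Every rest point P of the replicator dynamics that is asymptotically stable with respect to the variational norm must be finitely supported. -/
open MeasureTheory Filter Topology

/-- Variational (strong) norm distance between two measures:
`‖P - Q‖ = 2 ⋅ sup_B |P(B) - Q(B)|` over Borel sets `B`. -/
noncomputable def vdist {S : Type*} [MeasurableSpace S] (P Q : Measure S) : ℝ :=
  2 * ⨆ B : {B : Set S // MeasurableSet B}, |(P B.1).toReal - (Q B.1).toReal|

/-- Mean payoff `E(P,Q) = ∫∫ u(z,w) Q(dw) P(dz)`. -/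
noncomputable def payE {S : Type*} [MeasurableSpace S] (u : S → S → ℝ) (P Q : Measure S) : ℝ :=
  ∫ z, ∫ w, u z w ∂Q ∂P

/-- Average success `σ(z,Q) = E(δ_z,Q) - E(Q,Q)`. -/
noncomputable def sigmaF {S : Type*} [MeasurableSpace S] (u : S → S → ℝ) (z : S)
    (Q : Measure S) : ℝ :=
  (∫ w, u z w ∂Q) - payE u Q Q

/-- `P` is a rest point of the replicator dynamics: `F(P)(B) = ∫_B σ(z,P) P(dz) = 0` for all
Borel `B`. -/
def IsRestPoint {S : Type*} [MeasurableSpace S] (u : S → S → ℝ) (P : Measure S) : Prop :=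
  ∀ B : Set S, MeasurableSet B → ∫ z in B, sigmaF u z P ∂P = 0

/-- A solution of the replicator dynamics `Q'(t)(B) = ∫_B σ(z,Q(t)) Q(t)(dz)`. -/
def IsReplicatorTrajectory {S : Type*} [MeasurableSpace S] (u : S → S → ℝ)
    (Q : ℝ → Measure S) : Prop :=
  (∀ t : ℝ, IsProbabilityMeasure (Q t)) ∧
  ∀ B : Set S, MeasurableSet B → ∀ t : ℝ, 0 ≤ t →
    HasDerivAt (fun s => ((Q s) B).toReal) (∫ z in B, sigmaF u z (Q t) ∂(Q t)) t

/-- The polymorphic population state `P* = Σ_j α_j δ_{x_j}`. -/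
noncomputable def polyState {S : Type*} [MeasurableSpace S] {k : ℕ} (α : Fin k → ℝ)
    (x : Fin k → S) : Measure S :=
  ∑ j : Fin k, ENNReal.ofReal (α j) • Measure.dirac (x j)

/-- The (topological) support of a measure. -/
def msupport {S : Type*} [TopologicalSpace S] [MeasurableSpace S] (P : Measure S) : Set S :=
  {z | ∀ U : Set S, IsOpen U → z ∈ U → 0 < P U}

/-!
If `P` is not finitely supported, some point `z` of its support carries arbitrarily small mass,
hence so does an open neighbourhood `U` of `z`. Conditioning `P` on `Uᶜ` moves it by at most
`2 P(U)` in variational distance, yet removes `z` from the support. The replicator flow preserves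
supports, and a strong limit of measures supported in a closed set is supported there, so the
trajectory started at `P[|Uᶜ]` cannot converge to `P`.
-/

open ProbabilityTheory
open scoped ENNReal

section vdist

variable {S : Type*} [MeasurableSpace S]

lemma abs_toReal_sub_le_vdist (μ ν : Measure S) [IsFiniteMeasure μ] [IsFiniteMeasure ν]
    {B : Set S} (hB : MeasurableSet B) :
    |(μ B).toReal - (ν B).toReal| ≤ vdist μ ν / 2 := by
  have hbdd : BddAbove (Set.range fun B : {B : Set S // MeasurableSet B} =>
      |(μ B.1).toReal - (ν B.1).toReal|) := by
    refine ⟨μ.real Set.univ + ν.real Set.univ, ?_⟩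
    rintro _ ⟨B, rfl⟩
    have hμ : μ.real B.1 ≤ μ.real Set.univ := measureReal_mono (Set.subset_univ _)
    have hν : ν.real B.1 ≤ ν.real Set.univ := measureReal_mono (Set.subset_univ _)
    simp only [← measureReal_def]
    rw [abs_le]
    constructor <;> linarith [measureReal_nonneg (μ := μ) (s := B.1),
      measureReal_nonneg (μ := ν) (s := B.1)]
  have := le_ciSup hbdd ⟨B, hB⟩
  rw [vdist]
  linarith

lemma vdist_le_of_forall_abs_le {μ ν : Measure S} {c : ℝ} (hc : 0 ≤ c)
    (h : ∀ B, MeasurableSet B → |(μ B).toReal - (ν B).toReal| ≤ c) : vdist μ ν ≤ 2 * c := by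
  rw [vdist]
  gcongr
  exact Real.iSup_le (fun B => h B.1 B.2) hc

lemma vdist_cond_compl_le (P : Measure S) [IsProbabilityMeasure P] {U : Set S}
    (hU : MeasurableSet U) : vdist P[|Uᶜ] P ≤ 2 * (P U).toReal := by
  refine vdist_le_of_forall_abs_le ENNReal.toReal_nonneg fun B hB => ?_
  set p := (P U).toReal
  set a := (P (Uᶜ ∩ B)).toReal
  set b := (P (U ∩ B)).toReal
  have hPB : (P B).toReal = b + a := by
    rw [← measure_inter_add_sdiff₀ B hU.nullMeasurableSet, Set.inter_comm B U, Set.sdiff_eq,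
      Set.inter_comm B Uᶜ, ENNReal.toReal_add (measure_ne_top _ _) (measure_ne_top _ _)]
  have hPUc : (P Uᶜ).toReal = 1 - p := by
    rw [prob_compl_eq_one_sub hU, ENNReal.toReal_sub_of_le prob_le_one ENNReal.one_ne_top,
      ENNReal.toReal_one]
  have hcond : (P[|Uᶜ] B).toReal = (1 - p)⁻¹ * a := by
    rw [cond_apply hU.compl, ENNReal.toReal_mul, ENNReal.toReal_inv, hPUc]
  have ha : a ≤ 1 - p := hPUc ▸ ENNReal.toReal_mono (measure_ne_top _ _)
    (measure_mono Set.inter_subset_left)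
  have hb : b ≤ p := ENNReal.toReal_mono (measure_ne_top _ _) (measure_mono Set.inter_subset_left)
  have ha0 : 0 ≤ a := ENNReal.toReal_nonneg
  have hb0 : 0 ≤ b := ENNReal.toReal_nonneg
  rw [hcond, hPB, abs_le]
  rcases (ha0.trans ha).eq_or_lt with hp | hp
  · rw [← hp] at ha ⊢
    simp only [inv_zero, zero_mul]
    constructor <;> linarith
  · have hinv : (1 - p)⁻¹ * a * (1 - p) = a := by field_simp
    have hinv0 : 0 ≤ (1 - p)⁻¹ * a := mul_nonneg (inv_nonneg.2 hp.le) ha0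
    constructor <;> nlinarith

end vdist

section support

variable {S : Type*} [TopologicalSpace S] [MeasurableSpace S]

lemma msupport_eq_support (μ : Measure S) : msupport μ = μ.support := by
  rw [Measure.support_eq_forall_isOpen]
  ext z
  exact forall_congr' fun U => ⟨fun h hz hU => h hU hz, fun h hU hz => h hz hU⟩

lemma exists_finset_measure_eq_one_of_support_finite [HereditarilyLindelofSpace S]
    (P : Measure S) [IsProbabilityMeasure P] (h : P.support.Finite) :
    ∃ A : Finset S, P A = 1 :=
  ⟨h.toFinset, by
    rw [Set.Finite.coe_toFinset, measure_congr (ae_eq_univ.2 Measure.measure_compl_support),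
      measure_univ]⟩

lemma support_subset_of_tendsto_vdist [OpensMeasurableSpace S] [HereditarilyLindelofSpace S]
    {ι : Type*} {l : Filter ι} [l.NeBot] {Q : ι → Measure S} [∀ i, IsFiniteMeasure (Q i)]
    {P : Measure S} [IsFiniteMeasure P] (hQ : Tendsto (fun i => vdist (Q i) P) l (𝓝 0))
    {C : Set S} (hC : IsClosed C) (hsupp : ∀ᶠ i in l, (Q i).support ⊆ C) : P.support ⊆ C := by
  intro z hz
  by_contra hzC
  have hPC : 0 < (P Cᶜ).toReal := ENNReal.toReal_pos
    ((Measure.mem_support_iff_forall z).1 hz _ (hC.isOpen_compl.mem_nhds hzC)).ne'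
    (measure_ne_top _ _)
  obtain ⟨i, hclose, hsub⟩ := ((hQ.eventually (gt_mem_nhds hPC)).and hsupp).exists
  have hQC : Q i Cᶜ = 0 :=
    measure_mono_null (Set.compl_subset_compl.2 hsub) Measure.measure_compl_support
  have := abs_le.1 (abs_toReal_sub_le_vdist (Q i) P hC.isOpen_compl.measurableSet)
  rw [hQC, ENNReal.toReal_zero] at this
  linarith [this.1]

end support

lemma Set.Infinite.exists_measure_singleton_lt {S : Type*} [MeasurableSpace S]
    [MeasurableSingletonClass S] (μ : Measure S) [IsFiniteMeasure μ] {s : Set S}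
    (hs : s.Infinite) {ε : ℝ≥0∞} (hε : 0 < ε) : ∃ z ∈ s, μ {z} < ε := by
  have hlarge : {z | ε ≤ μ {z}}.Finite :=
    Measure.finite_const_le_meas_of_disjoint_iUnion μ hε measurableSet_singleton
      (fun _ _ h => Set.disjoint_singleton.2 h) (measure_ne_top _ _)
  obtain ⟨z, hzs, hz⟩ := (hs.sdiff hlarge).nonempty
  exact ⟨z, hzs, not_le.1 hz⟩

lemma exists_vdist_lt_not_support_subset {S : Type*} [TopologicalSpace S]
    [TopologicalSpace.PseudoMetrizableSpace S] [T1Space S] [HereditarilyLindelofSpace S]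
    [MeasurableSpace S] [BorelSpace S] (P : Measure S) [IsProbabilityMeasure P]
    (hP : P.support.Infinite) {η : ℝ} (hη : 0 < η) :
    ∃ Q : Measure S, IsProbabilityMeasure Q ∧ vdist Q P < η ∧ ¬ P.support ⊆ Q.support := by
  obtain ⟨z, hzP, hz⟩ := hP.exists_measure_singleton_lt P
    (lt_min (ENNReal.ofReal_pos.2 (half_pos hη)) zero_lt_one)
  obtain ⟨U, hzU, hU, hPU⟩ := Set.exists_isOpen_lt_of_lt {z} _ hz
  have hPU_small : (P U).toReal < η / 2 :=
    ENNReal.toReal_lt_of_lt_ofReal (hPU.trans_le (min_le_left _ _))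
  have hPUc : P Uᶜ ≠ 0 := by
    rw [prob_compl_eq_one_sub hU.measurableSet]
    exact (tsub_pos_of_lt (hPU.trans_le (min_le_right _ _))).ne'
  refine ⟨P[|Uᶜ], cond_isProbabilityMeasure hPUc, ?_, fun hsub => ?_⟩
  · linarith [vdist_cond_compl_le P hU.measurableSet]
  · refine Measure.notMem_support_iff_exists.2 ⟨U, hU.mem_nhds (hzU rfl), ?_⟩ (hsub hzP)
    rw [cond_apply hU.measurableSet.compl, Set.compl_inter_self, measure_empty, mul_zero]

theorem asymptoticallyStable_restPoint_finitelySupported_general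
    {S : Type*} [MeasurableSpace S] [TopologicalSpace S] [PolishSpace S] [BorelSpace S]
    (u : S → S → ℝ)
    (hexists : ∀ Q₀ : Measure S, IsProbabilityMeasure Q₀ →
      ∃ Q : ℝ → Measure S, IsReplicatorTrajectory u Q ∧ Q 0 = Q₀)
    (hsupp : ∀ Q : ℝ → Measure S, IsReplicatorTrajectory u Q →
      ∀ t : ℝ, 0 ≤ t → msupport (Q t) = msupport (Q 0))
    (P : Measure S) [IsProbabilityMeasure P]
    -- `P` is strongly attracting:
    (hAttr : ∃ η : ℝ, 0 < η ∧
      ∀ Q : ℝ → Measure S, IsReplicatorTrajectory u Q → vdist (Q 0) P < η →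
        Tendsto (fun t => vdist (Q t) P) atTop (𝓝 0)) :
    ∃ A : Finset S, P (↑A : Set S) = 1 := by
  obtain ⟨η, hη, hattr⟩ := hAttr
  by_contra hfin
  have hinf : P.support.Infinite := fun h =>
    hfin (exists_finset_measure_eq_one_of_support_finite P h)
  obtain ⟨Q₀, hQ₀, hQ₀P, hnot⟩ := exists_vdist_lt_not_support_subset P hinf hη
  obtain ⟨Q, hQ, rfl⟩ := hexists Q₀ hQ₀
  have hQprob := hQ.1
  refine hnot (support_subset_of_tendsto_vdist (hattr Q hQ hQ₀P) Measure.isClosed_support ?_)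
  filter_upwards [eventually_ge_atTop 0] with t ht
  rw [← msupport_eq_support, ← msupport_eq_support, hsupp Q hQ t ht]

/-- van Veelen–Spreij: a rest point of the replicator dynamics that is
asymptotically stable w.r.t. the variational norm must be finitely supported. The replicator
dynamics is assumed well posed (a solution exists from every initial probability measure) and
support preserving. -/
theorem asymptoticallyStable_restPoint_finitelySupported
    {S : Type*} [MeasurableSpace S] [TopologicalSpace S] [PolishSpace S] [BorelSpace S]
    (u : S → S → ℝ) (hu_meas : Measurable (Function.uncurry u))
    (hu_bdd : ∃ M : ℝ, ∀ z w : S, |u z w| ≤ M)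
    (hexists : ∀ Q₀ : Measure S, IsProbabilityMeasure Q₀ →
      ∃ Q : ℝ → Measure S, IsReplicatorTrajectory u Q ∧ Q 0 = Q₀)
    (hsupp : ∀ Q : ℝ → Measure S, IsReplicatorTrajectory u Q →
      ∀ t : ℝ, 0 ≤ t → msupport (Q t) = msupport (Q 0))
    (P : Measure S) [IsProbabilityMeasure P] (hrest : IsRestPoint u P)
    -- Lyapunov stability of `P`:
    (hLyap : ∀ ε : ℝ, 0 < ε → ∃ η : ℝ, 0 < η ∧
      ∀ Q : ℝ → Measure S, IsReplicatorTrajectory u Q → vdist (Q 0) P < η →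
        ∀ t : ℝ, 0 ≤ t → vdist (Q t) P < ε)
    -- `P` is strongly attracting:
    (hAttr : ∃ η : ℝ, 0 < η ∧
      ∀ Q : ℝ → Measure S, IsReplicatorTrajectory u Q → vdist (Q 0) P < η →
        Tendsto (fun t => vdist (Q t) P) atTop (𝓝 0)) :
    ∃ A : Finset S, P (↑A : Set S) = 1 :=
  asymptoticallyStable_restPoint_finitelySupported_general u hexists hsupp P hAttr
end

section
/- Along any replicator dynamics trajectory Q(t) with Q(t)({x_j}) > 0 for all j and t, the function t ↦ V(Q(t)) = Σ_j α_j ln(α_j / Q(t)({x_j})) satisfies d/dt V(Q(t)) = −E(P*, Q(t)) + E(Q(t), Q(t)), where P* = Σ_j α_jδ_{x_j}. -/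
open MeasureTheory Filter Topology

/-!
The replicator equation says that `log Q(t){x_j}` has derivative `σ(x_j, Q(t))`, so
`V(Q(t))' = -∑ α_j σ(x_j, Q(t))`. Integrating `σ(·, Q)` against `P*`, a finite combination of
Dirac masses with total weight one, gives `E(P*, Q) - E(Q, Q)`.
-/

section PolymorphicState

variable {S : Type*} [MeasurableSpace S] {k : ℕ} {α : Fin k → ℝ} {x : Fin k → S}

theorem integral_polyState {E : Type*} [NormedAddCommGroup E] [NormedSpace ℝ E]
    [CompleteSpace E] (hα : ∀ j, 0 ≤ α j) {f : S → E} (hf : StronglyMeasurable f) :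
    ∫ z, f z ∂polyState α x = ∑ j, α j • f (x j) := by
  rw [polyState, integral_finsetSum_measure fun j _ =>
    (integrable_dirac' hf enorm_lt_top).smul_measure ENNReal.ofReal_ne_top]
  simp only [integral_smul_measure, integral_dirac' _ _ hf, ENNReal.toReal_ofReal (hα _)]

theorem payE_polyState {u : S → S → ℝ} (hu : Measurable (Function.uncurry u))
    (hα : ∀ j, 0 ≤ α j) (Q : Measure S) [SFinite Q] :
    payE u (polyState α x) Q = ∑ j, α j * ∫ w, u (x j) w ∂Q :=
  integral_polyState hα hu.stronglyMeasurable.integral_prod_right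

theorem sum_mul_sigmaF_eq_payE_sub {u : S → S → ℝ} (hu : Measurable (Function.uncurry u))
    (hα : ∀ j, 0 ≤ α j) (hαsum : ∑ j, α j = 1) (Q : Measure S) [SFinite Q] :
    ∑ j, α j * sigmaF u (x j) Q = payE u (polyState α x) Q - payE u Q Q := by
  simp only [sigmaF, mul_sub, Finset.sum_sub_distrib, ← Finset.sum_mul, hαsum, one_mul,
    payE_polyState hu hα]

end PolymorphicState

theorem HasDerivAt.const_mul_log_const_div {f : ℝ → ℝ} {f' a t : ℝ} (hf : HasDerivAt f f' t)
    (ha : a ≠ 0) (hft : f t ≠ 0) :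
    HasDerivAt (fun s => a * Real.log (a / f s)) (-(a * (f' / f t))) t := by
  have hlog_div : (fun s => a * Real.log (a / f s)) =ᶠ[𝓝 t]
      fun s => a * (Real.log a - Real.log (f s)) := by
    filter_upwards [hf.continuousAt.eventually_ne hft] with s hs
    rw [Real.log_div ha hs]
  simpa using (((hf.log hft).const_sub (Real.log a)).const_mul a).congr_of_eventuallyEq hlog_div

theorem deriv_lyapunov_along_trajectory_general
    {S : Type*} [MeasurableSpace S]
    (u : S → S → ℝ) (hu_meas : Measurable (Function.uncurry u))
    {k : ℕ} (x : Fin k → S)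
    (α : Fin k → ℝ) (hα : ∀ j, 0 < α j) (hαsum : ∑ j, α j = 1)
    (Q : ℝ → Measure S) (hprob : ∀ t, IsProbabilityMeasure (Q t))
    (hpos : ∀ t, ∀ j, 0 < (Q t) {x j})
    (hdyn : ∀ j, ∀ t : ℝ, HasDerivAt (fun s => ((Q s) {x j}).toReal)
      (((Q t) {x j}).toReal * sigmaF u (x j) (Q t)) t) :
    ∀ t : ℝ, HasDerivAt (fun s => ∑ j, α j * Real.log (α j / ((Q s) {x j}).toReal))
      (-(payE u (polyState α x) (Q t)) + payE u (Q t) (Q t)) t := by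
  intro t
  have hmass_ne_zero : ∀ j, ((Q t) {x j}).toReal ≠ 0 := fun j =>
    (ENNReal.toReal_pos (hpos t j).ne' (measure_ne_top _ _)).ne'
  have hterm : ∀ j, HasDerivAt (fun s => α j * Real.log (α j / ((Q s) {x j}).toReal))
      (-(α j * sigmaF u (x j) (Q t))) t := fun j => by
    simpa only [mul_div_cancel_left₀ _ (hmass_ne_zero j)] using
      (hdyn j t).const_mul_log_const_div (hα j).ne' (hmass_ne_zero j)
  have hrate : -(payE u (polyState α x) (Q t)) + payE u (Q t) (Q t)
      = ∑ j, -(α j * sigmaF u (x j) (Q t)) := by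
    rw [Finset.sum_neg_distrib, sum_mul_sigmaF_eq_payE_sub hu_meas (fun j => (hα j).le) hαsum]
    ring
  rw [hrate]
  exact HasDerivAt.fun_sum fun j _ => hterm j

/-- along a replicator trajectory with positive atoms,
`d/dt V(Q(t)) = -E(P*,Q(t)) + E(Q(t),Q(t))` where
`V(Q) = Σ_j α_j ln(α_j / Q({x_j}))` and `P* = Σ_j α_j δ_{x_j}`. -/
theorem deriv_lyapunov_along_trajectory
    {S : Type*} [MeasurableSpace S] [TopologicalSpace S] [PolishSpace S] [BorelSpace S]
    (u : S → S → ℝ) (hu_meas : Measurable (Function.uncurry u))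
    (hu_bdd : ∃ M : ℝ, ∀ z w : S, |u z w| ≤ M)
    {k : ℕ} (hk : 0 < k) (x : Fin k → S) (hx : Function.Injective x)
    (α : Fin k → ℝ) (hα : ∀ j, 0 < α j) (hαsum : ∑ j, α j = 1)
    (Q : ℝ → Measure S) (hprob : ∀ t, IsProbabilityMeasure (Q t))
    (hpos : ∀ t, ∀ j, 0 < (Q t) {x j})
    (hdyn : ∀ j, ∀ t : ℝ, HasDerivAt (fun s => ((Q s) {x j}).toReal)
      (((Q t) {x j}).toReal * sigmaF u (x j) (Q t)) t) :
    ∀ t : ℝ, HasDerivAt (fun s => ∑ j, α j * Real.log (α j / ((Q s) {x j}).toReal))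
      (-(payE u (polyState α x) (Q t)) + payE u (Q t) (Q t)) t :=
  deriv_lyapunov_along_trajectory_general u hu_meas x α hα hαsum Q hprob hpos hdyn
end
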